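/- Let w ∈ S_n and suppose i ∈ supp(w) is unconfined in every reduced word of w. Then for every permutation u with u ⪯ w in Bruhat order, either i ∉ supp(u), or i is unconfined in every reduced word of u. -/

import Mathlib

/-- The adjacent transposition `σ_i`, swapping `i` and `i+1` (acting on `ℕ`). -/
def sigmaT (i : ℕ) : Equiv.Perm ℕ := Equiv.swap i (i + 1)

/-- The permutation given by a word (product of simple reflections, composed as functions). -/
def wordProd (s : List ℕ) : Equiv.Perm ℕ := (s.map sigmaT).prod

/-- `s` is a word for `w` in `S_n`: all letters lie in `{1,…,n-1}` and the product is `w`. -/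
def IsWord (n : ℕ) (w : Equiv.Perm ℕ) (s : List ℕ) : Prop :=
  (∀ j ∈ s, 1 ≤ j ∧ j ≤ n - 1) ∧ wordProd s = w

/-- `s` is a reduced word for `w`: a word of minimal length. -/
def IsReducedWord (n : ℕ) (w : Equiv.Perm ℕ) (s : List ℕ) : Prop :=
  IsWord n w s ∧ ∀ t : List ℕ, IsWord n w t → s.length ≤ t.length

/-- The Coxeter length `ℓ(w)`. -/
noncomputable def ell (n : ℕ) (w : Equiv.Perm ℕ) : ℕ :=
  sInf {k | ∃ s : List ℕ, IsWord n w s ∧ s.length = k}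

/-- The support of `w`: letters appearing in reduced words of `w`. -/
def supp (n : ℕ) (w : Equiv.Perm ℕ) : Set ℕ :=
  {i | ∃ s : List ℕ, IsReducedWord n w s ∧ i ∈ s}

/-- Bruhat order: some reduced word of `v` is a subsequence of some reduced word of `w`. -/
def BruhatLE (n : ℕ) (v w : Equiv.Perm ℕ) : Prop :=
  ∃ s t : List ℕ, IsReducedWord n v s ∧ IsReducedWord n w t ∧ s.Sublist t

/-- The principal order ideal `B(w)`, as a type. -/
def IdealB (n : ℕ) (w : Equiv.Perm ℕ) : Type := {v : Equiv.Perm ℕ // BruhatLE n v w}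

/-- The Bruhat order restricted to `B(w)`. -/
def IdealLE (n : ℕ) (w : Equiv.Perm ℕ) (a b : IdealB n w) : Prop := BruhatLE n a.1 b.1

/-- Two relations are isomorphic (order isomorphism of the corresponding ordered sets). -/
def RelIsomorphic {α β : Type*} (ra : α → α → Prop) (rb : β → β → Prop) : Prop :=
  ∃ e : α ≃ β, ∀ a b : α, ra a b ↔ rb (e a) (e b)

/-- `w` is a prism: `B(w) ≅ C₂ × X` for some partially ordered set `X`
(the two-element chain `C₂` realized as `Bool`), with the componentwise order. -/
def IsPrism (n : ℕ) (w : Equiv.Perm ℕ) : Prop :=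
  ∃ (X : Type) (rX : X → X → Prop), IsPartialOrder X rX ∧
    RelIsomorphic (IdealLE n w)
      (fun p q : Bool × X => (p.1 ≤ q.1) ∧ rX p.2 q.2)

/-- `w` belongs to `S_n`: it fixes every point outside `{1,…,n}`. -/
def MemSymm (n : ℕ) (w : Equiv.Perm ℕ) : Prop :=
  ∀ x : ℕ, x ∉ Set.Icc 1 n → w x = x

/-- `i` is unconfined in the word `s`: it appears exactly once, not between two copies
of `i+1` and not between two copies of `i-1`. -/
def Unconfined (i : ℕ) (s : List ℕ) : Prop :=
  s.count i = 1 ∧ ∀ a b : List ℕ, s = a ++ i :: b →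
    ¬((i + 1) ∈ a ∧ (i + 1) ∈ b) ∧ ¬((i - 1) ∈ a ∧ (i - 1) ∈ b)

/-- `B(w) ≅ C₂ × B(v)` with the componentwise order. -/
def IsoC2TimesIdeal (n : ℕ) (w v : Equiv.Perm ℕ) : Prop :=
  RelIsomorphic (IdealLE n w)
    (fun p q : Bool × IdealB n v => (p.1 ≤ q.1) ∧ IdealLE n v p.2 q.2)

/-! A reduced word of `u ⪯ w` can be taken to be a subword of a reduced word of `w`. If that
subword contains `i`, it inherits unconfinedness: `i` still occurs once, and a pattern
`[i ± 1, i, i ± 1]` in the subword would already occur in the word of `w`. By Matsumoto's theorem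
every reduced word of `u` is reached from this one by commutation and braid moves, and these
moves preserve the set of letters and the unconfinedness of `i` (a braid move `[j, k, j] ↔ [k, j, k]`
cannot involve an unconfined letter).

Matsumoto's theorem is proved by induction on the length, using that reduced words are exactly
the words whose length is the number of inversions: two right descents `j`, `m` of `v` are the
last letters of two reduced words of `v` that differ by a single move. -/

theorem sigmaT_apply (j x : ℕ) :
    sigmaT j x = if x = j then j + 1 else if x = j + 1 then j else x := by
  simp only [sigmaT, Equiv.swap_apply_def]

theorem mul_sigmaT_mul_sigmaT (v : Equiv.Perm ℕ) (j : ℕ) : v * sigmaT j * sigmaT j = v := by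
  rw [mul_assoc, sigmaT, Equiv.swap_mul_self, mul_one]

theorem mul_sigmaT_eq_iff {u v : Equiv.Perm ℕ} {j : ℕ} : u * sigmaT j = v ↔ u = v * sigmaT j :=
  ⟨fun h => by rw [← h, mul_sigmaT_mul_sigmaT], fun h => by rw [h, mul_sigmaT_mul_sigmaT]⟩

theorem sigmaT_comm {j k : ℕ} (h : j + 2 ≤ k ∨ k + 2 ≤ j) :
    sigmaT j * sigmaT k = sigmaT k * sigmaT j := by
  ext x
  simp only [Equiv.Perm.mul_apply, sigmaT_apply]
  split_ifs <;> omega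

theorem sigmaT_braid_succ (j : ℕ) :
    sigmaT j * sigmaT (j + 1) * sigmaT j = sigmaT (j + 1) * sigmaT j * sigmaT (j + 1) := by
  ext x
  simp only [Equiv.Perm.mul_apply, sigmaT_apply]
  split_ifs <;> omega

theorem sigmaT_braid {j k : ℕ} (h : j = k + 1 ∨ k = j + 1) :
    sigmaT j * sigmaT k * sigmaT j = sigmaT k * sigmaT j * sigmaT k := by
  rcases h with rfl | rfl
  exacts [(sigmaT_braid_succ k).symm, sigmaT_braid_succ j]

theorem wordProd_concat (s : List ℕ) (j : ℕ) : wordProd (s ++ [j]) = wordProd s * sigmaT j := by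
  simp [wordProd]

section MemSymm

variable {n : ℕ} {v : Equiv.Perm ℕ}

theorem sigmaT_apply_of_notMem {j x : ℕ} (hj : 1 ≤ j ∧ j ≤ n - 1) (hx : x ∉ Set.Icc 1 n) :
    sigmaT j x = x := by
  simp only [Set.mem_Icc, not_and_or, not_le] at hx
  rw [sigmaT_apply]
  split_ifs <;> omega

theorem MemSymm.mul_sigmaT (hv : MemSymm n v) {j : ℕ} (hj : 1 ≤ j ∧ j ≤ n - 1) :
    MemSymm n (v * sigmaT j) := fun x hx => by
  rw [Equiv.Perm.mul_apply, sigmaT_apply_of_notMem hj hx, hv x hx]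

theorem memSymm_wordProd {s : List ℕ} (hs : ∀ j ∈ s, 1 ≤ j ∧ j ≤ n - 1) :
    MemSymm n (wordProd s) := by
  induction s using List.reverseRecOn with
  | nil => exact fun x _ => rfl
  | append_singleton s j ih =>
    rw [wordProd_concat]
    exact (ih fun a ha => hs a (by simp [ha])).mul_sigmaT (hs j (by simp))

theorem IsWord.memSymm {s : List ℕ} (h : IsWord n v s) : MemSymm n v :=
  h.2 ▸ memSymm_wordProd h.1

theorem MemSymm.apply_le (hv : MemSymm n v) {x : ℕ} (hx : x ≤ n) : v x ≤ n := by
  by_contra h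
  have : v (v x) = v x := hv _ (by simp only [Set.mem_Icc]; omega)
  have := v.injective this
  omega

theorem MemSymm.exists_descent (hv : MemSymm n v) (h1 : v ≠ 1) :
    ∃ j, (1 ≤ j ∧ j ≤ n - 1) ∧ v (j + 1) < v j := by
  by_contra! hasc
  -- Without descents `v` increases on all of `ℕ`, and an increasing bijection of `ℕ` is `id`.
  have hmono : StrictMono v := by
    refine strictMono_nat_of_lt_succ fun x => ?_
    have hne : v x ≠ v (x + 1) := fun h => by simpa using v.injective h
    rcases Nat.eq_zero_or_pos x with rfl | hx
    · have : v 0 = 0 := hv 0 (by simp)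
      omega
    by_cases hxn : x + 1 ≤ n
    · exact lt_of_le_of_ne (hasc x ⟨hx, by omega⟩) hne
    · have : v (x + 1) = x + 1 := hv _ (by simp only [Set.mem_Icc]; omega)
      have : v x ≤ x := by
        by_cases hxn' : x ≤ n
        · have := hv.apply_le hxn'; omega
        · exact (hv x (by simp only [Set.mem_Icc]; omega)).le
      omega
  have hmono' : StrictMono ⇑v⁻¹ := fun a b hab => hmono.lt_iff_lt.mp (by simpa using hab)
  refine h1 (Equiv.ext fun x => le_antisymm ?_ (hmono.id_le x))
  simpa using hmono.monotone (hmono'.id_le x)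

end MemSymm

section Inversions

variable {n : ℕ}

def inversions (n : ℕ) (v : Equiv.Perm ℕ) : Finset (ℕ × ℕ) :=
  {p ∈ Finset.Icc 1 n ×ˢ Finset.Icc 1 n | p.1 < p.2 ∧ v p.2 < v p.1}

def invCount (n : ℕ) (v : Equiv.Perm ℕ) : ℕ := (inversions n v).card

theorem mk_mem_inversions_iff {v : Equiv.Perm ℕ} {a b : ℕ} :
    (a, b) ∈ inversions n v ↔ (1 ≤ a ∧ a ≤ n) ∧ (1 ≤ b ∧ b ≤ n) ∧ a < b ∧ v b < v a := by
  simp [inversions, and_assoc]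

/-- Relabelling pairs by `σ_j` matches the inversions of `v * σ_j` with those of `v`,
except for the pair `(j, j + 1)` itself. -/
theorem invCount_mul_sigmaT {v : Equiv.Perm ℕ} {j : ℕ} (hj : 1 ≤ j ∧ j ≤ n - 1)
    (h : v j < v (j + 1)) : invCount n (v * sigmaT j) = invCount n v + 1 := by
  have hpair : (j, j + 1) ∈ inversions n (v * sigmaT j) := by
    simp only [mk_mem_inversions_iff, Equiv.Perm.mul_apply, sigmaT_apply, if_pos,
      if_neg (Nat.succ_ne_self j)]
    omega
  have hpair' : (j, j + 1) ∉ inversions n v := by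
    rw [mk_mem_inversions_iff]
    omega
  have hcard : ((inversions n (v * sigmaT j)).erase (j, j + 1)).card =
      ((inversions n v).erase (j, j + 1)).card := by
    refine Finset.card_equiv ((sigmaT j).prodCongr (sigmaT j)) fun ⟨a, b⟩ => ?_
    simp only [Finset.mem_erase, ne_eq, Prod.mk.injEq, Equiv.prodCongr_apply, Prod.map,
      mk_mem_inversions_iff, Equiv.Perm.mul_apply]
    rw [sigmaT_apply j a, sigmaT_apply j b]
    split_ifs <;> omega
  rw [invCount, invCount, ← Finset.card_erase_add_one hpair, hcard,
    Finset.erase_eq_of_notMem hpair']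

theorem invCount_mul_sigmaT_add_one {v : Equiv.Perm ℕ} {j : ℕ} (hj : 1 ≤ j ∧ j ≤ n - 1)
    (h : v (j + 1) < v j) : invCount n (v * sigmaT j) + 1 = invCount n v := by
  have h' : (v * sigmaT j) j < (v * sigmaT j) (j + 1) := by
    simpa [sigmaT_apply] using h
  rw [← invCount_mul_sigmaT hj h', mul_sigmaT_mul_sigmaT]

theorem invCount_mul_sigmaT_le (v : Equiv.Perm ℕ) {j : ℕ} (hj : 1 ≤ j ∧ j ≤ n - 1) :
    invCount n (v * sigmaT j) ≤ invCount n v + 1 := by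
  rcases lt_or_gt_of_ne (v.injective.ne (by omega : j ≠ j + 1)) with h | h
  · exact (invCount_mul_sigmaT hj h).le
  · have := invCount_mul_sigmaT_add_one hj h
    omega

theorem invCount_wordProd_le_length {s : List ℕ} (hs : ∀ j ∈ s, 1 ≤ j ∧ j ≤ n - 1) :
    invCount n (wordProd s) ≤ s.length := by
  induction s using List.reverseRecOn with
  | nil =>
    simp only [wordProd, List.map_nil, List.prod_nil, invCount, List.length_nil,
      Nat.le_zero, Finset.card_eq_zero, Finset.eq_empty_iff_forall_notMem]
    intro ⟨a, b⟩
    simp only [mk_mem_inversions_iff, Equiv.Perm.one_apply]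
    omega
  | append_singleton s j ih =>
    rw [wordProd_concat, List.length_append, List.length_singleton]
    have := invCount_mul_sigmaT_le (wordProd s) (hs j (by simp))
    have := ih fun a ha => hs a (by simp [ha])
    omega

theorem isWord_concat_iff {v : Equiv.Perm ℕ} {s : List ℕ} {j : ℕ} (hj : 1 ≤ j ∧ j ≤ n - 1) :
    IsWord n v (s ++ [j]) ↔ IsWord n (v * sigmaT j) s := by
  simp only [IsWord, List.mem_append, List.mem_singleton, or_imp, forall_and, forall_eq, hj,
    and_true, wordProd_concat, mul_sigmaT_eq_iff]

theorem MemSymm.exists_isWord_length_le {v : Equiv.Perm ℕ} (hv : MemSymm n v) :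
    ∃ s, IsWord n v s ∧ s.length ≤ invCount n v := by
  induction hk : invCount n v using Nat.strong_induction_on generalizing v with
  | _ k ih =>
  by_cases h1 : v = 1
  · exact ⟨[], ⟨by simp, h1.symm⟩, by simp⟩
  obtain ⟨j, hj, hdesc⟩ := hv.exists_descent h1
  have hk' := invCount_mul_sigmaT_add_one hj hdesc
  obtain ⟨s, ⟨hs, hsv⟩, hlen⟩ := ih _ (by omega) (hv.mul_sigmaT hj) rfl
  exact ⟨s ++ [j], (isWord_concat_iff hj).2 ⟨hs, hsv⟩, by simp; omega⟩

end Inversions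

section ReducedWords

variable {n : ℕ} {v : Equiv.Perm ℕ} {s : List ℕ}

theorem IsWord.invCount_le_length (h : IsWord n v s) : invCount n v ≤ s.length :=
  h.2 ▸ invCount_wordProd_le_length h.1

theorem isReducedWord_iff : IsReducedWord n v s ↔ IsWord n v s ∧ s.length = invCount n v := by
  refine ⟨fun ⟨hs, hmin⟩ => ⟨hs, ?_⟩, fun ⟨hs, hlen⟩ => ⟨hs, fun t ht => ?_⟩⟩
  · obtain ⟨t, ht, hlen⟩ := hs.memSymm.exists_isWord_length_le
    exact le_antisymm ((hmin t ht).trans hlen) hs.invCount_le_length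
  · exact hlen ▸ ht.invCount_le_length

theorem MemSymm.exists_isReducedWord (hv : MemSymm n v) : ∃ s, IsReducedWord n v s := by
  obtain ⟨s, hs, hlen⟩ := hv.exists_isWord_length_le
  exact ⟨s, isReducedWord_iff.2 ⟨hs, le_antisymm hlen hs.invCount_le_length⟩⟩

theorem IsReducedWord.length_eq {t : List ℕ} (hs : IsReducedWord n v s)
    (ht : IsReducedWord n v t) : s.length = t.length :=
  (isReducedWord_iff.1 hs).2.trans (isReducedWord_iff.1 ht).2.symm

theorem isReducedWord_concat_iff {j : ℕ} (hj : 1 ≤ j ∧ j ≤ n - 1) :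
    IsReducedWord n v (s ++ [j]) ↔ v (j + 1) < v j ∧ IsReducedWord n (v * sigmaT j) s := by
  simp only [isReducedWord_iff, isWord_concat_iff hj, List.length_append, List.length_singleton]
  rcases lt_or_gt_of_ne (v.injective.ne (by omega : j ≠ j + 1)) with h | h
  · have := invCount_mul_sigmaT hj h
    refine ⟨fun ⟨hs, hlen⟩ => ?_, fun ⟨h', _⟩ => absurd h' (by omega)⟩
    have := hs.invCount_le_length
    omega
  · have := invCount_mul_sigmaT_add_one hj h
    grind

end ReducedWords

inductive BraidRel : List ℕ → List ℕ → Prop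
  | comm {j k : ℕ} (h : j + 2 ≤ k ∨ k + 2 ≤ j) : BraidRel [j, k] [k, j]
  | braid {j k : ℕ} (h : j = k + 1 ∨ k = j + 1) : BraidRel [j, k, j] [k, j, k]

theorem BraidRel.symm {m₁ m₂ : List ℕ} : BraidRel m₁ m₂ → BraidRel m₂ m₁
  | comm h => comm h.symm
  | braid h => braid h.symm

inductive BraidMove : List ℕ → List ℕ → Prop
  | intro (x y : List ℕ) {m₁ m₂ : List ℕ} (h : BraidRel m₁ m₂) :
      BraidMove (x ++ m₁ ++ y) (x ++ m₂ ++ y)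

instance : Std.Symm BraidMove where
  symm _ _ := fun ⟨x, y, h⟩ => ⟨x, y, h.symm⟩

abbrev BraidEq : List ℕ → List ℕ → Prop := Relation.ReflTransGen BraidMove

namespace BraidEq

variable {s t u : List ℕ}

theorem symm (h : BraidEq s t) : BraidEq t s := Std.Symm.symm _ _ h

theorem trans (h₁ : BraidEq s t) (h₂ : BraidEq t u) : BraidEq s u :=
  Relation.ReflTransGen.trans h₁ h₂

theorem append_right (h : BraidEq s t) (r : List ℕ) : BraidEq (s ++ r) (t ++ r) :=
  Relation.ReflTransGen.lift (· ++ r) (fun _ _ ⟨x, y, h⟩ => by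
    simpa [Function.onFun] using BraidMove.intro x (y ++ r) h) _ _ h

theorem of_braidRel (z : List ℕ) {m₁ m₂ : List ℕ} (h : BraidRel m₁ m₂) :
    BraidEq (z ++ m₁) (z ++ m₂) := by
  simpa using Relation.ReflTransGen.single (BraidMove.intro z [] h)

theorem invariant {P : List ℕ → Prop} (h : BraidEq s t)
    (hP : ∀ {s t}, BraidMove s t → P s → P t) (hs : P s) : P t := by
  induction h with
  | refl => exact hs
  | tail _ hmove ih => exact hP hmove ih

end BraidEq

section Matsumoto

variable {n : ℕ} {v : Equiv.Perm ℕ} {s : List ℕ} {j m : ℕ}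

theorem IsReducedWord.concat (hs : IsReducedWord n (v * sigmaT j) s) (hj : 1 ≤ j ∧ j ≤ n - 1)
    (hd : v (j + 1) < v j) : IsReducedWord n v (s ++ [j]) :=
  (isReducedWord_concat_iff hj).2 ⟨hd, hs⟩

theorem isReducedWord_append_comm {z : List ℕ} (hjm : j + 2 ≤ m ∨ m + 2 ≤ j)
    (hj : 1 ≤ j ∧ j ≤ n - 1) (hm : 1 ≤ m ∧ m ≤ n - 1)
    (hdj : v (j + 1) < v j) (hdm : v (m + 1) < v m)
    (hz : IsReducedWord n (v * sigmaT j * sigmaT m) z) :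
    IsReducedWord n v (z ++ [m] ++ [j]) := by
  have hdm' : (v * sigmaT j) (m + 1) < (v * sigmaT j) m := by
    simp only [Equiv.Perm.mul_apply, sigmaT_apply]
    split_ifs <;> omega
  exact (hz.concat hm hdm').concat hj hdj

theorem isReducedWord_append_braid {z : List ℕ} (hjm : j = m + 1 ∨ m = j + 1)
    (hj : 1 ≤ j ∧ j ≤ n - 1) (hm : 1 ≤ m ∧ m ≤ n - 1)
    (hdj : v (j + 1) < v j) (hdm : v (m + 1) < v m)
    (hz : IsReducedWord n (v * sigmaT j * sigmaT m * sigmaT j) z) :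
    IsReducedWord n v (z ++ [j] ++ [m] ++ [j]) := by
  have hdm' : (v * sigmaT j) (m + 1) < (v * sigmaT j) m ∧
      (v * sigmaT j * sigmaT m) (j + 1) < (v * sigmaT j * sigmaT m) j := by
    rcases hjm with rfl | rfl <;> simp only [Equiv.Perm.mul_apply, sigmaT_apply] <;>
      split_ifs <;> omega
  exact ((hz.concat hj hdm'.2).concat hm hdm'.1).concat hj hdj

theorem exists_braidEq_of_descents (hv : MemSymm n v) (hj : 1 ≤ j ∧ j ≤ n - 1)
    (hm : 1 ≤ m ∧ m ≤ n - 1) (hdj : v (j + 1) < v j) (hdm : v (m + 1) < v m) :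
    ∃ r₁ r₂, IsReducedWord n v (r₁ ++ [j]) ∧ IsReducedWord n v (r₂ ++ [m]) ∧
      BraidEq (r₁ ++ [j]) (r₂ ++ [m]) := by
  rcases eq_or_ne j m with rfl | hne
  · obtain ⟨z, hz⟩ := (hv.mul_sigmaT hj).exists_isReducedWord
    exact ⟨z, z, hz.concat hj hdj, hz.concat hj hdj, Relation.ReflTransGen.refl⟩
  by_cases hfar : j + 2 ≤ m ∨ m + 2 ≤ j
  · obtain ⟨z, hz⟩ := ((hv.mul_sigmaT hj).mul_sigmaT hm).exists_isReducedWord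
    have hz' : IsReducedWord n (v * sigmaT m * sigmaT j) z := by
      rwa [mul_assoc, ← sigmaT_comm hfar, ← mul_assoc]
    refine ⟨z ++ [m], z ++ [j], isReducedWord_append_comm hfar hj hm hdj hdm hz,
      isReducedWord_append_comm hfar.symm hm hj hdm hdj hz', ?_⟩
    simpa using BraidEq.of_braidRel z (BraidRel.comm hfar.symm)
  · have hadj : j = m + 1 ∨ m = j + 1 := by omega
    obtain ⟨z, hz⟩ :=
      (((hv.mul_sigmaT hj).mul_sigmaT hm).mul_sigmaT hj).exists_isReducedWord
    have hz' : IsReducedWord n (v * sigmaT m * sigmaT j * sigmaT m) z := by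
      rwa [mul_assoc, mul_assoc, ← mul_assoc (sigmaT m), ← sigmaT_braid hadj, ← mul_assoc,
        ← mul_assoc]
    refine ⟨z ++ [j] ++ [m], z ++ [m] ++ [j], isReducedWord_append_braid hadj hj hm hdj hdm hz,
      isReducedWord_append_braid hadj.symm hm hj hdm hdj hz', ?_⟩
    simpa using BraidEq.of_braidRel z (BraidRel.braid hadj)

/-- Matsumoto's theorem. -/
theorem IsReducedWord.braidEq {t : List ℕ} (hs : IsReducedWord n v s)
    (ht : IsReducedWord n v t) : BraidEq s t := by
  induction hk : s.length using Nat.strong_induction_on generalizing v s t with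
  | _ k ih =>
  rcases s.eq_nil_or_concat' with rfl | ⟨s, j, rfl⟩
  · rw [List.eq_nil_of_length_eq_zero (hs.length_eq ht).symm]
  rcases t.eq_nil_or_concat' with rfl | ⟨t, m, rfl⟩
  · simpa using hs.length_eq ht
  have hj := hs.1.1 j (by simp)
  have hm := ht.1.1 m (by simp)
  obtain ⟨hdj, hs'⟩ := (isReducedWord_concat_iff hj).1 hs
  obtain ⟨hdm, ht'⟩ := (isReducedWord_concat_iff hm).1 ht
  obtain ⟨r₁, r₂, h₁, h₂, h₁₂⟩ := exists_braidEq_of_descents hs.1.memSymm hj hm hdj hdm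
  have hlen := hs.length_eq ht
  simp only [List.length_append, List.length_singleton] at hk hlen
  have e₁ := (ih _ (by omega) hs' ((isReducedWord_concat_iff hj).1 h₁).2 rfl).append_right [j]
  have e₂ := (ih _ (by omega) ht' ((isReducedWord_concat_iff hm).1 h₂).2 rfl).append_right [m]
  exact e₁.trans (h₁₂.trans e₂.symm)

end Matsumoto

namespace List

theorem Sublist.append_middle_of_subset {α : Type*} {P x y m₁ m₂ : List α}
    (h : P <+ x ++ m₁ ++ y) (hsub : m₁ ⊆ m₂)
    (hshort : ∀ q, q <:+: P → q <+ m₁ → q.length ≤ 1) : P <+ x ++ m₂ ++ y := by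
  rw [append_assoc] at h ⊢
  obtain ⟨p₁, p, rfl, h₁, h⟩ := sublist_append_iff.1 h
  obtain ⟨p₂, p₃, rfl, h₂, h₃⟩ := sublist_append_iff.1 h
  have h₂' : p₂ <+ m₂ := by
    match p₂, hshort p₂ (infix_append' p₁ p₂ p₃) h₂ with
    | [], _ => exact nil_sublist _
    | [a], _ => exact singleton_sublist.2 (hsub (h₂.subset (mem_singleton_self a)))
  exact h₁.append (h₂'.append h₃)

theorem exists_eq_cons_cons_of_infix_triple {α : Type*} {c i : α} {q : List α}
    (hq : q <:+: [c, i, c]) (h2 : 2 ≤ q.length) :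
    ∃ a b r, q = a :: b :: r ∧ (a = c ∧ b = i ∨ a = i ∧ b = c) := by
  obtain ⟨s, t, h⟩ := hq
  rcases s with _ | ⟨_, _ | ⟨_, _ | ⟨_, s⟩⟩⟩ <;> rcases q with _ | ⟨_, _ | ⟨_, q⟩⟩ <;> simp_all

end List

section Unconfined

open scoped List

variable {i : ℕ} {s t : List ℕ}

theorem triple_sublist_iff {c : ℕ} {l : List ℕ} :
    [c, i, c] <+ l ↔ ∃ a b, l = a ++ i :: b ∧ c ∈ a ∧ c ∈ b := by
  constructor
  · intro h
    obtain ⟨r₁, r₂, rfl, hc₁, h⟩ := List.cons_sublist_iff.1 h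
    obtain ⟨q₁, q₂, rfl, hi, hc₂⟩ := List.cons_sublist_iff.1 h
    obtain ⟨u, w, rfl⟩ := List.append_of_mem hi
    exact ⟨r₁ ++ u, w ++ q₂, by simp, List.mem_append_left _ hc₁,
      List.mem_append_right _ (List.singleton_sublist.1 hc₂)⟩
  · rintro ⟨a, b, rfl, ha, hb⟩
    simpa using (List.singleton_sublist.2 ha).append
      ((List.singleton_sublist.2 hb).cons_cons i)

theorem unconfined_iff_not_sublist :
    Unconfined i s ↔ s.count i = 1 ∧ ¬[i + 1, i, i + 1] <+ s ∧ ¬[i - 1, i, i - 1] <+ s := by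
  simp only [Unconfined, triple_sublist_iff, not_exists, not_and]
  grind

theorem Unconfined.of_sublist (hu : Unconfined i t) (hst : s <+ t) (hi : i ∈ s) :
    Unconfined i s := by
  rw [unconfined_iff_not_sublist] at hu ⊢
  obtain ⟨hcount, hup, hdown⟩ := hu
  have := hst.count_le i
  have := List.count_pos_iff.2 hi
  exact ⟨by omega, fun h => hup (h.trans hst), fun h => hdown (h.trans hst)⟩

theorem BraidMove.unconfined (hmove : BraidMove s t) (hu : Unconfined i s) : Unconfined i t := by
  obtain @⟨x, y, m₁, m₂, hrel⟩ := hmove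
  rw [unconfined_iff_not_sublist] at hu ⊢
  obtain ⟨hcount, hup, hdown⟩ := hu
  suffices hmid : m₂.count i = m₁.count i ∧ m₂ ⊆ m₁ ∧
      ∀ c q, c ≤ i + 1 → i ≤ c + 1 → q <:+: [c, i, c] → q <+ m₂ → q.length ≤ 1 by
    obtain ⟨hc, hsub, hshort⟩ := hmid
    refine ⟨by simpa [hc] using hcount, fun h => hup ?_, fun h => hdown ?_⟩
    exacts [h.append_middle_of_subset hsub (hshort _ · (by omega) (by omega)),
      h.append_middle_of_subset hsub (hshort _ · (by omega) (by omega))]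
  cases hrel with
  | @comm j k hjk =>
    refine ⟨(List.Perm.swap j k []).count_eq i, by simp [List.subset_def, or_comm],
      fun c q hc hc' hq hqm => ?_⟩
    by_contra! h2
    obtain ⟨a, b, r, rfl, hab⟩ := List.exists_eq_cons_cons_of_infix_triple hq (by omega)
    have : a :: b :: r = [k, j] := hqm.eq_of_length_le (by simp)
    simp only [List.cons.injEq] at this
    omega
  | @braid j k hjk =>
    -- `i` cannot occur in `[j, k, j]`: twice `j` breaks `count i = 1`, and `k` would be confined.
    have hi : i ≠ j ∧ i ≠ k := by
      refine ⟨fun hij => ?_, fun hik => ?_⟩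
      · simp [hij, List.count_cons] at hcount
        omega
      · rcases hjk with rfl | rfl
        · exact hup (by rw [hik]; exact (List.infix_append x _ y).sublist)
        · exact hdown (by rw [hik, Nat.add_sub_cancel]; exact (List.infix_append x _ y).sublist)
    refine ⟨by simp [hi.1.symm, hi.2.symm], by simp [List.subset_def],
      fun c q _ _ hq hqm => ?_⟩
    by_contra! h2
    obtain ⟨a, b, r, rfl, hab⟩ := List.exists_eq_cons_cons_of_infix_triple hq (by omega)
    have : i ∈ [k, j, k] := hqm.subset (by rcases hab with ⟨-, rfl⟩ | ⟨rfl, -⟩ <;> simp)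
    simp [hi.1, hi.2] at this

theorem BraidEq.unconfined (h : BraidEq s t) (hu : Unconfined i s) : Unconfined i t :=
  h.invariant (fun hmove => hmove.unconfined) hu

theorem BraidMove.subset (h : BraidMove s t) : s ⊆ t := by
  obtain ⟨x, y, hrel⟩ := h
  cases hrel <;> simp [List.subset_def] <;> tauto

theorem BraidEq.mem (h : BraidEq s t) (hi : i ∈ s) : i ∈ t :=
  h.invariant (fun hmove hi => hmove.subset hi) hi

end Unconfined

theorem unconfined_propagates_downward_general (n : ℕ) (w : Equiv.Perm ℕ) (i : ℕ)
    (hu : ∀ s : List ℕ, IsReducedWord n w s → Unconfined i s) :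
    ∀ u : Equiv.Perm ℕ, BruhatLE n u w →
      i ∉ supp n u ∨ ∀ s : List ℕ, IsReducedWord n u s → Unconfined i s := by
  rintro u ⟨s₀, t₀, hs₀, ht₀, hsub⟩
  by_cases hi : i ∈ s₀
  · exact Or.inr fun s hs => (hs₀.braidEq hs).unconfined ((hu t₀ ht₀).of_sublist hsub hi)
  · exact Or.inl fun ⟨s, hs, his⟩ => hi ((hs.braidEq hs₀).mem his)

/-- unconfinedness propagates downward in the Bruhat order. -/
theorem unconfined_propagates_downward (n : ℕ) (w : Equiv.Perm ℕ) (hw : MemSymm n w) (i : ℕ)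
    (hi : i ∈ supp n w)
    (hu : ∀ s : List ℕ, IsReducedWord n w s → Unconfined i s) :
    ∀ u : Equiv.Perm ℕ, BruhatLE n u w →
      i ∉ supp n u ∨ ∀ s : List ℕ, IsReducedWord n u s → Unconfined i s :=
  unconfined_propagates_downward_general n w i hu
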